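/- Let m ≤ n and let C ∈ ℝ^{n×n} be symmetric positive definite. Then the cost S₃ is coercive: for every c ∈ ℝ there exists R > 0 such that for every W ∈ ℝ^{m×n} and every symmetric positive semidefinite N ∈ ℝ^{m×m} with N³ = W C Wᵀ, if ‖W‖_F ≥ R then 2‖W‖_F² − 3‖N‖_F² ≥ c. -/

import Mathlib

/-!
Write `x = ‖W‖_F²` and `s = ‖N‖_F²`. Cauchy–Schwarz for `N^{1/2}` and `N^{3/2}` gives
`s² ≤ tr N · tr N³`, and `(tr N)² ≤ m s`, hence `s³ ≤ m (tr N³)²`. Since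
`|tr N³| = |tr (W C Wᵀ)| ≤ ‖C‖_F x` by submultiplicativity of the Frobenius norm, `s` grows at most
like `x^{2/3}`, so `3 s ≤ x` once `x ≥ 27 m ‖C‖_F²`, and then `2 x - 3 s ≥ x`.
-/

open Matrix

/-- Squared Frobenius norm `‖A‖_F² = tr(AᵀA)`. -/
noncomputable def frobSq {k l : ℕ} (A : Matrix (Fin k) (Fin l) ℝ) : ℝ := (Aᵀ * A).trace

attribute [local instance] Matrix.frobeniusNormedAddCommGroup

lemma frobSq_eq_sum_sq {k l : ℕ} (A : Matrix (Fin k) (Fin l) ℝ) :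
    frobSq A = ∑ i, ∑ j, A i j ^ 2 := by
  rw [frobSq, trace, Finset.sum_comm]
  simp [mul_apply, sq]

lemma frobSq_nonneg {k l : ℕ} (A : Matrix (Fin k) (Fin l) ℝ) : 0 ≤ frobSq A := by
  rw [frobSq_eq_sum_sq]
  positivity

lemma frobSq_eq_norm_sq {k l : ℕ} (A : Matrix (Fin k) (Fin l) ℝ) : frobSq A = ‖A‖ ^ 2 := by
  rw [frobSq_eq_sum_sq, frobenius_norm_def, ← Real.rpow_natCast,
    ← Real.rpow_mul (by positivity)]
  norm_num

lemma trace_transpose_mul_sq_le {k l : ℕ} (A B : Matrix (Fin k) (Fin l) ℝ) :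
    (Aᵀ * B).trace ^ 2 ≤ frobSq A * frobSq B := by
  have h_sum (X Y : Matrix (Fin k) (Fin l) ℝ) :
      (Xᵀ * Y).trace = ∑ p : Fin k × Fin l, X p.1 p.2 * Y p.1 p.2 := by
    rw [Fintype.sum_prod_type, trace, Finset.sum_comm]
    simp [mul_apply]
  rw [h_sum, frobSq, frobSq, h_sum, h_sum]
  simpa [sq] using Finset.sum_mul_sq_le_sq_mul_sq Finset.univ
    (fun p : Fin k × Fin l => A p.1 p.2) (fun p => B p.1 p.2)

lemma trace_sq_le_card_mul_frobSq {k : ℕ} (N : Matrix (Fin k) (Fin k) ℝ) :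
    N.trace ^ 2 ≤ k * frobSq N :=
  calc N.trace ^ 2 ≤ k * ∑ i, N i i ^ 2 := by
        simpa [trace] using sq_sum_le_card_mul_sum_sq (s := Finset.univ) (f := N.diag)
    _ ≤ k * frobSq N := by
        rw [frobSq_eq_sum_sq]
        gcongr with i
        exact Finset.single_le_sum (f := fun j => N i j ^ 2) (fun _ _ => sq_nonneg _)
          (Finset.mem_univ i)

lemma trace_mul_mul_transpose_sq_le {k l : ℕ} (W : Matrix (Fin k) (Fin l) ℝ)
    (C : Matrix (Fin l) (Fin l) ℝ) :
    (W * C * Wᵀ).trace ^ 2 ≤ frobSq C * frobSq W ^ 2 := by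
  have h_mul : frobSq (C * Wᵀ) ≤ frobSq C * frobSq W := by
    rw [frobSq_eq_norm_sq, frobSq_eq_norm_sq, frobSq_eq_norm_sq, ← mul_pow,
      ← frobenius_norm_transpose W]
    gcongr
    exact frobenius_norm_mul C Wᵀ
  calc (W * C * Wᵀ).trace ^ 2 = (Wᵀᵀ * (C * Wᵀ)).trace ^ 2 := by
        rw [transpose_transpose, Matrix.mul_assoc]
    _ ≤ frobSq Wᵀ * frobSq (C * Wᵀ) := trace_transpose_mul_sq_le _ _
    _ ≤ frobSq W * (frobSq C * frobSq W) := by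
        rw [frobSq_eq_norm_sq Wᵀ, frobenius_norm_transpose, ← frobSq_eq_norm_sq]
        gcongr
        exact frobSq_nonneg W
    _ = frobSq C * frobSq W ^ 2 := by ring

open scoped MatrixOrder in
lemma Matrix.PosSemidef.frobSq_sq_le_trace_mul_trace_pow_three {k : ℕ}
    {N : Matrix (Fin k) (Fin k) ℝ} (hN : N.PosSemidef) :
    frobSq N ^ 2 ≤ N.trace * (N ^ 3).trace := by
  set Q := CFC.sqrt N
  have hQ : Qᵀ = Q := isHermitian_iff_isSymm.mp (CFC.sqrt_nonneg N).posSemidef.isHermitian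
  have hN' : Nᵀ = N := isHermitian_iff_isSymm.mp hN.isHermitian
  have hQQ : Q * Q = N := CFC.sqrt_mul_sqrt_self N hN.nonneg
  have h_inner : (Qᵀ * (Q * N)).trace = frobSq N := by
    rw [frobSq, hQ, hN', ← Matrix.mul_assoc, hQQ]
  have h_left : frobSq Q = N.trace := by rw [frobSq, hQ, hQQ]
  have h_right : frobSq (Q * N) = (N ^ 3).trace := by
    rw [frobSq, transpose_mul, hQ, hN', Matrix.mul_assoc, ← Matrix.mul_assoc Q, hQQ,
      ← sq, ← pow_succ']
  simpa only [h_inner, h_left, h_right] using trace_transpose_mul_sq_le Q (Q * N)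

lemma Matrix.PosSemidef.frobSq_pow_three_le {k : ℕ} {N : Matrix (Fin k) (Fin k) ℝ}
    (hN : N.PosSemidef) : frobSq N ^ 3 ≤ k * (N ^ 3).trace ^ 2 := by
  rcases (frobSq_nonneg N).eq_or_lt with hs | hs
  · rw [← hs, zero_pow three_ne_zero]
    positivity
  have h := pow_le_pow_left₀ (sq_nonneg _) hN.frobSq_sq_le_trace_mul_trace_pow_three 2
  rw [← pow_mul, mul_pow] at h
  refine le_of_mul_le_mul_left ?_ hs
  calc frobSq N * frobSq N ^ 3 = frobSq N ^ 4 := by ring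
    _ ≤ N.trace ^ 2 * (N ^ 3).trace ^ 2 := h
    _ ≤ (k * frobSq N) * (N ^ 3).trace ^ 2 := by gcongr; exact trace_sq_le_card_mul_frobSq N
    _ = frobSq N * (k * (N ^ 3).trace ^ 2) := by ring

lemma three_mul_le_of_pow_three_le_mul_sq {a s x : ℝ} (hx : 0 ≤ x)
    (h : s ^ 3 ≤ a * x ^ 2) (hax : 27 * a ≤ x) : 3 * s ≤ x := by
  refine le_of_pow_le_pow_left₀ three_ne_zero hx ?_
  calc (3 * s) ^ 3 = 27 * s ^ 3 := by ring
    _ ≤ 27 * (a * x ^ 2) := by gcongr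
    _ = 27 * a * x ^ 2 := by ring
    _ ≤ x * x ^ 2 := by gcongr
    _ = x ^ 3 := by ring

theorem third_level_cost_coercive_general
    {m n : ℕ}
    (C : Matrix (Fin n) (Fin n) ℝ) :
    ∀ c : ℝ, ∃ R : ℝ, 0 < R ∧
      ∀ (W : Matrix (Fin m) (Fin n) ℝ) (N : Matrix (Fin m) (Fin m) ℝ),
        N.PosSemidef → N ^ 3 = W * C * Wᵀ →
        R ≤ Real.sqrt (frobSq W) →
        c ≤ 2 * frobSq W - 3 * frobSq N := by
  intro c
  have ha : 0 ≤ m * frobSq C := by have := frobSq_nonneg C; positivity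
  refine ⟨27 * (m * frobSq C) + |c| + 1, by positivity, fun W N hN hcube hR => ?_⟩
  have hW : 27 * (m * frobSq C) + |c| + 1 ≤ frobSq W := by
    have hR_sq := (Real.le_sqrt (by positivity) (frobSq_nonneg W)).mp hR
    exact (le_self_pow₀ (by linarith [abs_nonneg c]) two_ne_zero).trans hR_sq
  have hN_growth : frobSq N ^ 3 ≤ m * frobSq C * frobSq W ^ 2 :=
    calc frobSq N ^ 3 ≤ m * (N ^ 3).trace ^ 2 := hN.frobSq_pow_three_le
      _ ≤ m * (frobSq C * frobSq W ^ 2) := by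
          rw [hcube]; gcongr; exact trace_mul_mul_transpose_sq_le W C
      _ = m * frobSq C * frobSq W ^ 2 := by ring
  have hN_small := three_mul_le_of_pow_three_le_mul_sq (frobSq_nonneg W) hN_growth
    (by linarith [abs_nonneg c])
  linarith [le_abs_self c]

/-- coercivity of the third-level cost
`S₃(W) = 2‖W‖_F² − 3‖(W C Wᵀ)^{1/3}‖_F²`. -/
theorem third_level_cost_coercive
    {m n : ℕ} (hmn : m ≤ n)
    (C : Matrix (Fin n) (Fin n) ℝ) (hC : C.PosDef) :
    ∀ c : ℝ, ∃ R : ℝ, 0 < R ∧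
      ∀ (W : Matrix (Fin m) (Fin n) ℝ) (N : Matrix (Fin m) (Fin m) ℝ),
        N.PosSemidef → N ^ 3 = W * C * Wᵀ →
        R ≤ Real.sqrt (frobSq W) →
        c ≤ 2 * frobSq W - 3 * frobSq N :=
  third_level_cost_coercive_general C
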